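/- arXiv:1002.4387 — 5 statements merged into one kernel-verified Lean document; each statement's English description precedes it below -/
import Mathlib

section
/- Let ω be a double form of bidegree (p,q) on V. Then c_g(g·ω) = g·(c_g ω) + (n − p − q)·ω. -/
/-- Double forms on the inner product space `ℝⁿ` (with its standard inner product `g`),
described by their components with respect to the standard orthonormal basis: the component
at bidegree `(p, q)` is a real-valued function of `p` "row" indices and `q` "column" indices
(an element of `Λᵖ(ℝⁿ)* ⊗ Λ^q(ℝⁿ)*` is exactly such a component function which is
antisymmetric in each group of indices). -/
abbrev DoubleForm (n : ℕ) : Type :=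
  ∀ p q : ℕ, (Fin p → Fin n) → (Fin q → Fin n) → ℝ

/-- `ω` is a double form of bidegree `(p, q)`: it is concentrated at `(p, q)` and is
antisymmetric in each group of arguments. -/
def dfHasBidegree (n p q : ℕ) (ω : DoubleForm n) : Prop :=
  (∀ p' q', ¬(p' = p ∧ q' = q) → ω p' q' = 0) ∧
  (∀ (σ : Equiv.Perm (Fin p)) (x : Fin p → Fin n) (y : Fin q → Fin n),
      ω p q (x ∘ σ) y = ((Equiv.Perm.sign σ : ℤ) : ℝ) * ω p q x y) ∧
  (∀ (τ : Equiv.Perm (Fin q)) (x : Fin p → Fin n) (y : Fin q → Fin n),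
      ω p q x (y ∘ τ) = ((Equiv.Perm.sign τ : ℤ) : ℝ) * ω p q x y)

/-- The unit double form (the constant `1` in bidegree `(0,0)`). -/
noncomputable def dfOne (n : ℕ) : DoubleForm n
  | 0, 0, _, _ => 1
  | _, _, _, _ => 0

/-- The metric `g` (the standard inner product) as a `(1,1)` double form. -/
noncomputable def dfG (n : ℕ) : DoubleForm n
  | 1, 1, x, y => if x 0 = y 0 then 1 else 0
  | _, _, _, _ => 0

/-- The product of double forms: the wedge product (determinant convention) on each of the
two tensor factors, with no extra sign (so that `(θ₁⊗θ₂)·(θ₃⊗θ₄) = (θ₁∧θ₃)⊗(θ₂∧θ₄)`). -/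
noncomputable def dfMul (n : ℕ) (ω θ : DoubleForm n) : DoubleForm n :=
  fun p q x y =>
    ∑ p₁ : Fin (p + 1), ∑ q₁ : Fin (q + 1),
      (((p₁ : ℕ).factorial * (p - (p₁ : ℕ)).factorial *
          (q₁ : ℕ).factorial * (q - (q₁ : ℕ)).factorial : ℕ) : ℝ)⁻¹ *
        ∑ σ : Equiv.Perm (Fin p), ∑ τ : Equiv.Perm (Fin q),
          ((Equiv.Perm.sign σ : ℤ) : ℝ) * ((Equiv.Perm.sign τ : ℤ) : ℝ) *
            (ω (p₁ : ℕ) (q₁ : ℕ)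
               (fun i => x (σ (Fin.castLE (Nat.lt_succ_iff.mp p₁.isLt) i)))
               (fun j => y (τ (Fin.castLE (Nat.lt_succ_iff.mp q₁.isLt) j))) *
             θ (p - (p₁ : ℕ)) (q - (q₁ : ℕ))
               (fun i => x (σ ⟨(p₁ : ℕ) + (i : ℕ), by
                  have h1 := i.isLt; have h2 := p₁.isLt; omega⟩))
               (fun j => y (τ ⟨(q₁ : ℕ) + (j : ℕ), by
                  have h1 := j.isLt; have h2 := q₁.isLt; omega⟩)))

/-- Powers of a double form with respect to the product `dfMul`. -/
noncomputable def dfPow (n : ℕ) (ω : DoubleForm n) : ℕ → DoubleForm n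
  | 0 => dfOne n
  | m + 1 => dfMul n (dfPow n ω m) ω

/-- The contraction `c_g` with respect to the standard inner product: it maps the
`(p+1, q+1)` component to the `(p, q)` component by tracing over a pair of slots
(and is zero on bidegrees `(p, 0)` and `(0, q)`). -/
noncomputable def dfContr (n : ℕ) (ω : DoubleForm n) : DoubleForm n :=
  fun p q x y => ∑ i : Fin n, ω (p + 1) (q + 1) (Fin.cons i x) (Fin.cons i y)

/-- The natural inner product, at bidegree `(p, q)`, induced by `g` on double forms
(for which the monomials with strictly increasing indices are orthonormal). -/
noncomputable def dfInner (n p q : ℕ) (ω θ : DoubleForm n) : ℝ :=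
  ((p.factorial * q.factorial : ℕ) : ℝ)⁻¹ *
    ∑ x : Fin p → Fin n, ∑ y : Fin q → Fin n, ω p q x y * θ p q x y

/-- For a bilinear form `h` on `ℝⁿ` (given by its component matrix), the operator `F_h`,
inserting the `g`-symmetric endomorphism `H` associated to `h` into each slot in turn. -/
noncomputable def dfF (n : ℕ) (h : Fin n → Fin n → ℝ) (ω : DoubleForm n) : DoubleForm n :=
  fun p q x y =>
    (∑ k : Fin p, ∑ i : Fin n, h (x k) i * ω p q (Function.update x k i) y) +
    (∑ k : Fin q, ∑ i : Fin n, h (y k) i * ω p q x (Function.update y k i))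

/-- A bilinear form on `ℝⁿ` (given by its component matrix) as a `(1,1)` double form. -/
noncomputable def dfOfMatrix (n : ℕ) (h : Fin n → Fin n → ℝ) : DoubleForm n
  | 1, 1, x, y => h (x 0) (y 0)
  | _, _, _, _ => 0

/-- The component matrix of the `(1,1)` part of a double form. -/
noncomputable def dfMat (n : ℕ) (ω : DoubleForm n) : Fin n → Fin n → ℝ :=
  fun i j => ω 1 1 (fun _ => i) (fun _ => j)

/-- `R ∈ C²`: a `(2,2)` double form satisfying the symmetry
`R(x₁∧x₂ ⊗ y₁∧y₂) = R(y₁∧y₂ ⊗ x₁∧x₂)`. -/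
def dfIsC2 (n : ℕ) (R : DoubleForm n) : Prop :=
  dfHasBidegree n 2 2 R ∧ ∀ x y : Fin 2 → Fin n, R 2 2 x y = R 2 2 y x

/-- The operator `𝔑_R` : `(𝔑_R h)(v, w) = Σᵢ h(R(v, eᵢ)w, eᵢ)`, where the `(3,1)`-tensor of
`R` is determined by `g(R(x,y)z, u) = R(x∧y ⊗ z∧u)`. -/
noncomputable def curvAction (n : ℕ) (R : DoubleForm n) (h : Fin n → Fin n → ℝ) :
    Fin n → Fin n → ℝ :=
  fun v w => ∑ i : Fin n, ∑ u : Fin n, R 2 2 ![v, i] ![w, u] * h u i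

/-- The contraction associated to an arbitrary metric on `ℝⁿ` whose Gram matrix in the
standard basis is `G`: `c_{g'} ω = Σᵢⱼ (G⁻¹)ᵢⱼ ω(vᵢ∧… ⊗ vⱼ∧…)`. -/
noncomputable def dfContrM (n : ℕ) (G : Matrix (Fin n) (Fin n) ℝ) (ω : DoubleForm n) :
    DoubleForm n :=
  fun p q x y => ∑ i : Fin n, ∑ j : Fin n,
    (G⁻¹) i j * ω (p + 1) (q + 1) (Fin.cons i x) (Fin.cons j y)

/-!
Expanding `g·θ` along the first argument on each side (a Laplace expansion in both groups
of alternating arguments) gives `(g·θ)(x ⊗ y) = Σ_{k,l} ± g(x_k, y_l) θ(x̂_k ⊗ ŷ_l)`.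
For `c_g(g·ω)` put `x = (eᵢ, X)`, `y = (eᵢ, Y)` and sum over `i`: the term `k = l = 0`
contributes `n ω`, the terms where exactly one of `k, l` is `0` contribute `-q ω` and
`-p ω` (the factor `g(eᵢ, ·)` collapses the sum over `i`), and the terms with `k, l ≠ 0`
are exactly the expansion of `g·(c_g ω)`.
-/

open Equiv Equiv.Perm Finset

lemma sum_perm_fin_succ {m : ℕ} (F : Perm (Fin (m + 1)) → ℝ) :
    ∑ σ, F σ = ∑ k, ∑ e : Perm (Fin m), F (decomposeFin.symm (k, e)) := by
  rw [← Equiv.sum_comp decomposeFin.symm, Fintype.sum_prod_type]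

lemma Int.cast_units_mul_self (u : ℤˣ) : ((u : ℤ) : ℝ) * ((u : ℤ) : ℝ) = 1 := by
  rw [← Int.cast_mul, ← Units.val_mul, Int.units_mul_self, Units.val_one, Int.cast_one]

lemma sum_sign_mul_eq_factorial_mul_sum {α : Type*} {m : ℕ} (x : Fin (m + 1) → α)
    (Φ : α → (Fin m → α) → ℝ)
    (hΦ : ∀ a (e : Perm (Fin m)) z, Φ a (z ∘ e) = ((sign e : ℤ) : ℝ) * Φ a z) :
    ∑ σ : Perm (Fin (m + 1)), ((sign σ : ℤ) : ℝ) * Φ (x (σ 0)) (fun i => x (σ i.succ)) =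
      m.factorial * ∑ k, (if k = 0 then (1 : ℝ) else -1) *
        Φ (x k) (fun i => x (swap 0 k i.succ)) := by
  rw [sum_perm_fin_succ, mul_sum]
  refine sum_congr rfl fun k _ => ?_
  have hterm : ∀ e : Perm (Fin m),
      ((sign (decomposeFin.symm (k, e)) : ℤ) : ℝ) * Φ (x (decomposeFin.symm (k, e) 0))
          (fun i => x (decomposeFin.symm (k, e) i.succ)) =
        (if k = 0 then (1 : ℝ) else -1) * Φ (x k) (fun i => x (swap 0 k i.succ)) := by
    intro e
    have hcomp : (fun i => x (decomposeFin.symm (k, e) i.succ)) =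
        (fun i => x (swap 0 k i.succ)) ∘ e := by
      funext i; simp only [decomposeFin_symm_apply_succ, Function.comp_apply]
    rw [hcomp, hΦ, decomposeFin.symm_sign, decomposeFin_symm_apply_zero]
    have hε : (((if k = 0 then 1 else -1 : ℤˣ) : ℤ) : ℝ) = if k = 0 then 1 else -1 := by
      split_ifs <;> simp
    rw [Units.val_mul, Int.cast_mul, hε]
    linear_combination (if k = 0 then (1 : ℝ) else -1) * Φ (x k) (fun i => x (swap 0 k i.succ)) *
        Int.cast_units_mul_self (sign e)
  simp only [hterm, sum_const, card_univ, Fintype.card_perm, Fintype.card_fin, nsmul_eq_mul]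

def dfIsAlternating (n P Q : ℕ) (θ : DoubleForm n) : Prop :=
  (∀ (σ : Perm (Fin P)) (x : Fin P → Fin n) (y : Fin Q → Fin n),
      θ P Q (x ∘ σ) y = ((sign σ : ℤ) : ℝ) * θ P Q x y) ∧
  (∀ (τ : Perm (Fin Q)) (x : Fin P → Fin n) (y : Fin Q → Fin n),
      θ P Q x (y ∘ τ) = ((sign τ : ℤ) : ℝ) * θ P Q x y)

lemma dfIsAlternating_of_dfHasBidegree {n p q : ℕ} {ω : DoubleForm n}
    (hω : dfHasBidegree n p q ω) (P Q : ℕ) : dfIsAlternating n P Q ω := by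
  by_cases hPQ : P = p ∧ Q = q
  · obtain ⟨rfl, rfl⟩ := hPQ
    exact hω.2
  · simp only [dfIsAlternating, hω.1 P Q hPQ, Pi.zero_apply, mul_zero, implies_true, and_self]

lemma dfG_eq_zero {n a b : ℕ} (h : ¬(a = 1 ∧ b = 1)) (x : Fin a → Fin n) (y : Fin b → Fin n) :
    dfG n a b x y = 0 := by
  match a, b with
  | 1, 1 => exact absurd ⟨rfl, rfl⟩ h
  | 0, _ => rfl
  | _ + 2, _ => rfl
  | 1, 0 => rfl
  | 1, _ + 2 => rfl

lemma dfMul_dfG_zero_left {n : ℕ} (θ : DoubleForm n) (Q : ℕ) (x : Fin 0 → Fin n)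
    (y : Fin Q → Fin n) : dfMul n (dfG n) θ 0 Q x y = 0 := by
  simp [dfMul, dfG_eq_zero]

lemma dfMul_dfG_zero_right {n : ℕ} (θ : DoubleForm n) (P : ℕ) (x : Fin P → Fin n)
    (y : Fin 0 → Fin n) : dfMul n (dfG n) θ P 0 x y = 0 := by
  simp [dfMul, dfG_eq_zero]

lemma dfMul_dfG_succ_succ_eq_sum_perm {n P Q : ℕ} (θ : DoubleForm n)
    (x : Fin (P + 1) → Fin n) (y : Fin (Q + 1) → Fin n) :
    dfMul n (dfG n) θ (P + 1) (Q + 1) x y =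
      ((P.factorial * Q.factorial : ℕ) : ℝ)⁻¹ *
        ∑ σ : Perm (Fin (P + 1)), ∑ τ : Perm (Fin (Q + 1)),
          ((sign σ : ℤ) : ℝ) * ((sign τ : ℤ) : ℝ) *
            ((if x (σ 0) = y (τ 0) then (1 : ℝ) else 0) *
              θ P Q (fun i => x (σ i.succ)) (fun j => y (τ j.succ))) := by
  have hG : ∀ (a : Fin (P + 2)) (b : Fin (Q + 2)), ¬(a = 1 ∧ b = 1) →
      ∀ (x' : Fin a → Fin n) (y' : Fin b → Fin n), dfG n a b x' y' = 0 := by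
    rintro a b hab x' y'
    refine dfG_eq_zero (fun h => hab ⟨Fin.ext ?_, Fin.ext ?_⟩) x' y' <;> simp [h.1, h.2]
  unfold dfMul
  rw [Fintype.sum_eq_single (1 : Fin (P + 2)), Fintype.sum_eq_single (1 : Fin (Q + 2))]
  · have hsucc : ∀ {m : ℕ} (i : Fin m) (h : 1 + (i : ℕ) < m + 1),
        (⟨1 + i, h⟩ : Fin (m + 1)) = i.succ := fun i _ => Fin.ext (Nat.add_comm _ _)
    simp only [Fin.val_one, Nat.factorial_one, one_mul, mul_one, hsucc]
    rfl
  · intro b hb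
    refine mul_eq_zero_of_right _ (sum_eq_zero fun σ _ => sum_eq_zero fun τ _ => ?_)
    rw [hG 1 b (fun h => hb h.2), zero_mul, mul_zero]
  · intro a ha
    refine sum_eq_zero fun b _ => mul_eq_zero_of_right _ ?_
    refine sum_eq_zero fun σ _ => sum_eq_zero fun τ _ => ?_
    rw [hG a b (fun h => ha h.1), zero_mul, mul_zero]

/-- `fun i => x (swap 0 k i.succ)` is `x` with its `k`-th entry deleted, up to the reordering
whose sign is `if k = 0 then 1 else -1`. -/
theorem dfMul_dfG_succ_succ {n P Q : ℕ} {θ : DoubleForm n} (hθ : dfIsAlternating n P Q θ)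
    (x : Fin (P + 1) → Fin n) (y : Fin (Q + 1) → Fin n) :
    dfMul n (dfG n) θ (P + 1) (Q + 1) x y =
      ∑ k, ∑ l, (if k = 0 then (1 : ℝ) else -1) * (if l = 0 then (1 : ℝ) else -1) *
        (if x k = y l then (1 : ℝ) else 0) *
          θ P Q (fun i => x (swap 0 k i.succ)) (fun j => y (swap 0 l j.succ)) := by
  have hinner : ∀ σ : Perm (Fin (P + 1)),
      ∑ τ : Perm (Fin (Q + 1)), ((sign σ : ℤ) : ℝ) * ((sign τ : ℤ) : ℝ) *
          ((if x (σ 0) = y (τ 0) then (1 : ℝ) else 0) *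
            θ P Q (fun i => x (σ i.succ)) (fun j => y (τ j.succ))) =
        ((sign σ : ℤ) : ℝ) * (Q.factorial * ∑ l, (if l = 0 then (1 : ℝ) else -1) *
          ((if x (σ 0) = y l then (1 : ℝ) else 0) *
            θ P Q (fun i => x (σ i.succ)) (fun j => y (swap 0 l j.succ)))) := by
    intro σ
    simp_rw [mul_assoc, ← mul_sum]
    congr 1
    refine sum_sign_mul_eq_factorial_mul_sum y
      (fun b w => (if x (σ 0) = b then (1 : ℝ) else 0) * θ P Q (fun i => x (σ i.succ)) w) ?_
    intro b e w
    simp only [hθ.2]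
    ring
  simp_rw [dfMul_dfG_succ_succ_eq_sum_perm, hinner]
  rw [sum_sign_mul_eq_factorial_mul_sum x (fun a z => Q.factorial * ∑ l,
      (if l = 0 then (1 : ℝ) else -1) *
        ((if a = y l then (1 : ℝ) else 0) * θ P Q z (fun j => y (swap 0 l j.succ))))]
  · have hP : (P.factorial : ℝ) ≠ 0 := by positivity
    have hQ : (Q.factorial : ℝ) ≠ 0 := by positivity
    simp only [mul_sum, Nat.cast_mul]
    refine sum_congr rfl fun k _ => sum_congr rfl fun l _ => ?_
    field_simp
  · intro a e z
    simp only [hθ.1, mul_sum]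
    exact sum_congr rfl fun l _ => by ring

section FinCons

variable {α : Type*} {m : ℕ}

lemma cons_swap_succ_succ (i : α) (X : Fin m → α) (k : Fin m) :
    (fun j => (Fin.cons i X : Fin (m + 1) → α) (swap 0 k.succ j.succ)) =
      Function.update X k i := by
  funext j
  rcases eq_or_ne j k with rfl | hjk
  · simp
  · have : j.succ ≠ k.succ := fun h => hjk (Fin.succ_injective _ h)
    simp [swap_apply_of_ne_of_ne (Fin.succ_ne_zero j) this, hjk]

lemma cons_swap_eq_update_comp_swap (X : Fin (m + 1) → α) (k : Fin (m + 1)) (i : α) :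
    (Fin.cons i (fun j => X (swap 0 k j.succ)) : Fin (m + 1) → α) =
      Function.update X k i ∘ swap 0 k := by
  funext j
  refine Fin.cases ?_ (fun j => ?_) j
  · simp
  · have : swap 0 k j.succ ≠ k := by
      rw [Ne, swap_apply_eq_iff, swap_apply_right]
      exact Fin.succ_ne_zero j
    simp [Function.update_of_ne this]

lemma cons_comp_perm (i : α) (X : Fin m → α) (σ : Perm (Fin m)) :
    (Fin.cons i (X ∘ σ) : Fin (m + 1) → α) = Fin.cons i X ∘ decomposeFin.symm (0, σ) := by
  funext j
  refine Fin.cases ?_ (fun j => ?_) j <;>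
    simp [decomposeFin_symm_apply_zero, decomposeFin_symm_apply_succ]

lemma sign_swap_zero (k : Fin (m + 1)) :
    ((sign (swap 0 k) : ℤ) : ℝ) = if k = 0 then 1 else -1 := by
  rcases eq_or_ne k 0 with rfl | hk
  · simp
  · simp [sign_swap hk.symm, hk]

end FinCons

lemma dfIsAlternating_dfContr {n P Q : ℕ} {ω : DoubleForm n}
    (hω : dfIsAlternating n (P + 1) (Q + 1) ω) : dfIsAlternating n P Q (dfContr n ω) := by
  constructor
  · intro σ x y
    simp only [dfContr, mul_sum, cons_comp_perm, hω.1, decomposeFin.symm_sign, if_pos, one_mul]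
  · intro τ x y
    simp only [dfContr, mul_sum, cons_comp_perm, hω.2, decomposeFin.symm_sign, if_pos, one_mul]

theorem dfContr_dfMul_dfG_apply {n P Q : ℕ} {ω : DoubleForm n} (hω : dfIsAlternating n P Q ω)
    (X : Fin P → Fin n) (Y : Fin Q → Fin n) :
    dfContr n (dfMul n (dfG n) ω) P Q X Y =
      ((n : ℝ) - P - Q) * ω P Q X Y +
        ∑ k, ∑ l, (if X k = Y l then (1 : ℝ) else 0) *
          ∑ i, ω P Q (Function.update X k i) (Function.update Y l i) := by
  simp only [dfContr, dfMul_dfG_succ_succ hω, Fin.sum_univ_succ, cons_swap_succ_succ, swap_self,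
    refl_apply, Fin.cons_zero, Fin.cons_succ, Fin.succ_ne_zero, if_true, if_false, mul_one,
    one_mul, neg_mul, mul_neg, sum_add_distrib, sum_neg_distrib]
  have hrow : ∑ i, ∑ k, (if X k = i then (1 : ℝ) else 0) * ω P Q (Function.update X k i) Y =
      P * ω P Q X Y := by
    rw [sum_comm]
    simp [ite_mul, sum_ite_eq]
  have hcol : ∑ i, ∑ l, (if i = Y l then (1 : ℝ) else 0) * ω P Q X (Function.update Y l i) =
      Q * ω P Q X Y := by
    rw [sum_comm]
    simp [ite_mul, sum_ite_eq']
  have hmix : ∑ i, ∑ k, ∑ l, (if X k = Y l then (1 : ℝ) else 0) *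
        ω P Q (Function.update X k i) (Function.update Y l i) =
      ∑ k, ∑ l, (if X k = Y l then (1 : ℝ) else 0) *
        ∑ i, ω P Q (Function.update X k i) (Function.update Y l i) := by
    rw [sum_comm]
    simp_rw [mul_sum]
    exact sum_congr rfl fun k _ => sum_comm
  rw [hrow, hcol, hmix, sum_const, card_univ, Fintype.card_fin, nsmul_eq_mul]
  ring

theorem dfMul_dfG_dfContr_apply {n P Q : ℕ} {ω : DoubleForm n}
    (hω : dfIsAlternating n P Q ω) (X : Fin P → Fin n) (Y : Fin Q → Fin n) :
    dfMul n (dfG n) (dfContr n ω) P Q X Y =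
      ∑ k, ∑ l, (if X k = Y l then (1 : ℝ) else 0) *
          ∑ i, ω P Q (Function.update X k i) (Function.update Y l i) := by
  match P, Q, ω, hω, X, Y with
  | 0, _, _, _, _, _ => simp [dfMul_dfG_zero_left]
  | _ + 1, 0, _, _, _, _ => simp [dfMul_dfG_zero_right]
  | P + 1, Q + 1, ω, hω, X, Y =>
    rw [dfMul_dfG_succ_succ (dfIsAlternating_dfContr hω)]
    refine sum_congr rfl fun k _ => sum_congr rfl fun l _ => ?_
    have hcontr : dfContr n ω P Q (fun i => X (swap 0 k i.succ)) (fun j => Y (swap 0 l j.succ)) =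
        (if k = 0 then (1 : ℝ) else -1) * (if l = 0 then (1 : ℝ) else -1) *
          ∑ i, ω (P + 1) (Q + 1) (Function.update X k i) (Function.update Y l i) := by
      simp only [dfContr, cons_swap_eq_update_comp_swap, hω.1, hω.2, sign_swap_zero, mul_sum]
      exact sum_congr rfl fun i _ => by ring
    have hsq : ∀ {m : ℕ} (j : Fin (m + 1)), (if j = 0 then (1 : ℝ) else -1) ^ 2 = 1 := by
      intro m j; split_ifs <;> norm_num
    rw [hcontr]
    linear_combination (if X k = Y l then (1 : ℝ) else 0) *
        (∑ i, ω (P + 1) (Q + 1) (Function.update X k i) (Function.update Y l i)) *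
      ((if l = 0 then (1 : ℝ) else -1) ^ 2 * hsq k + hsq l)

/-- For a double form `ω` of bidegree `(p, q)`,
`c_g(g·ω) = g·(c_g ω) + (n − p − q)·ω`. -/
theorem stmt_0 (n p q : ℕ) (ω : DoubleForm n) (hω : dfHasBidegree n p q ω) :
    dfContr n (dfMul n (dfG n) ω) =
      dfMul n (dfG n) (dfContr n ω) + ((n : ℝ) - (p : ℝ) - (q : ℝ)) • ω := by
  funext P Q X Y
  have hPQ := dfIsAlternating_of_dfHasBidegree hω P Q
  simp only [Pi.add_apply, Pi.smul_apply, smul_eq_mul, dfContr_dfMul_dfG_apply hPQ,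
    dfMul_dfG_dfContr_apply hPQ]
  by_cases hbideg : P = p ∧ Q = q
  · obtain ⟨rfl, rfl⟩ := hbideg
    ring
  · simp [hω.1 P Q hbideg]
end

section
/- For p, q ≥ 1, for every double form ω of bidegree (p−1,q−1) and every double form θ of bidegree (p,q) on V, one has ⟨g·ω, θ⟩ = ⟨ω, c_g θ⟩; that is, multiplication by the metric g and the contraction c_g are adjoint to each other with respect to the natural induced inner products on double forms. -/
/-!
Only the splitting of `g · ω` with a `(1,1)` first factor survives, so
`(g · ω)(x, y) = (p! q!)⁻¹ ∑_{σ,τ} sgn σ sgn τ δ(x (σ 0), y (τ 0)) ω(tail (x ∘ σ), tail (y ∘ τ))`.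
Pairing with `θ` and reindexing `x ↦ x ∘ σ`, `y ↦ y ∘ τ`, the antisymmetry of `θ` absorbs the
signs, so all `(p+1)! (q+1)!` terms are equal; the remaining sum, with its Kronecker delta on the
first slots, is exactly the trace defining `c_g θ`.
-/

open Equiv Equiv.Perm Finset Nat

section

variable {n : ℕ}

lemma dfG_eq_zero_of_ne {a b : ℕ} (h : ¬(a = 1 ∧ b = 1)) : dfG n a b = 0 := by
  match a, b with
  | 1, 1 => exact absurd ⟨rfl, rfl⟩ h
  | 0, _ => rfl
  | _ + 2, _ => rfl
  | 1, 0 => rfl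
  | 1, _ + 2 => rfl

lemma dfMul_dfG_apply (p q : ℕ) (ω : DoubleForm n) (x : Fin (p + 1) → Fin n)
    (y : Fin (q + 1) → Fin n) :
    dfMul n (dfG n) ω (p + 1) (q + 1) x y =
      ((p ! * q ! : ℕ) : ℝ)⁻¹ * ∑ σ : Perm (Fin (p + 1)), ∑ τ : Perm (Fin (q + 1)),
        ((sign σ : ℤ) : ℝ) * ((sign τ : ℤ) : ℝ) *
          ((if x (σ 0) = y (τ 0) then 1 else 0) *
            ω p q (Fin.tail (x ∘ σ)) (Fin.tail (y ∘ τ))) := by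
  have hsucc : ∀ {m : ℕ} (i : Fin m) (h : 1 + (i : ℕ) < m + 1),
      (⟨1 + i, h⟩ : Fin (m + 1)) = i.succ := fun i _ => Fin.ext (Nat.add_comm _ _)
  rw [dfMul, Fintype.sum_eq_single 1, Fintype.sum_eq_single 1]
  · simp only [Fin.val_one, Nat.add_sub_cancel, factorial_one, one_mul, mul_one, hsucc]
    rfl
  all_goals
    intro b hb
    have hb' : (b : ℕ) ≠ 1 := fun h => hb (Fin.ext (by simp [h]))
    simp [dfG_eq_zero_of_ne, hb']

lemma sum_comp_perm {M : Type*} [AddCommMonoid M] {m : ℕ} (σ : Perm (Fin m))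
    (F : (Fin m → Fin n) → M) : ∑ x : Fin m → Fin n, F (x ∘ σ) = ∑ x, F x :=
  Equiv.sum_comp (σ.symm.arrowCongr (Equiv.refl _)) F

lemma sum_sign_mul_comp_perm_mul {p q : ℕ} {θ : DoubleForm n} (hθ : dfHasBidegree n p q θ)
    (F : (Fin p → Fin n) → (Fin q → Fin n) → ℝ) (σ : Perm (Fin p)) (τ : Perm (Fin q)) :
    ∑ x, ∑ y, ((sign σ : ℤ) : ℝ) * ((sign τ : ℤ) : ℝ) * F (x ∘ σ) (y ∘ τ) * θ p q x y =
      ∑ x, ∑ y, F x y * θ p q x y := by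
  symm
  rw [← sum_comp_perm σ]
  refine sum_congr rfl fun x _ => ?_
  rw [← sum_comp_perm τ]
  refine sum_congr rfl fun y _ => ?_
  rw [hθ.2.1, hθ.2.2]
  ring

lemma sum_sum_ite_apply_zero_eq_sum_cons {M : Type*} [AddCommMonoid M] {p q : ℕ}
    (F : (Fin (p + 1) → Fin n) → (Fin (q + 1) → Fin n) → M) :
    ∑ x : Fin (p + 1) → Fin n, ∑ y : Fin (q + 1) → Fin n, (if x 0 = y 0 then F x y else 0) =
      ∑ x : Fin p → Fin n, ∑ y : Fin q → Fin n, ∑ i, F (Fin.cons i x) (Fin.cons i y) := by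
  simp only [← (Fin.consEquiv fun _ => Fin n).sum_comp, Fintype.sum_prod_type,
    Fin.consEquiv_apply, Fin.cons_zero, ← ite_sum_zero, sum_ite_eq, mem_univ, if_true]
  exact sum_comm.trans (sum_congr rfl fun _ _ => sum_comm)

lemma dfInner_dfG_mul_eq_dfInner_dfContr {p q : ℕ} {θ : DoubleForm n}
    (hθ : dfHasBidegree n (p + 1) (q + 1) θ) (ω : DoubleForm n) :
    dfInner n (p + 1) (q + 1) (dfMul n (dfG n) ω) θ = dfInner n p q ω (dfContr n θ) := by
  set S := ∑ x : Fin (p + 1) → Fin n, ∑ y : Fin (q + 1) → Fin n,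
    if x 0 = y 0 then ω p q (Fin.tail x) (Fin.tail y) * θ (p + 1) (q + 1) x y else 0
  have hterm : ∀ (σ : Perm (Fin (p + 1))) (τ : Perm (Fin (q + 1))),
      ∑ x, ∑ y, ((sign σ : ℤ) : ℝ) * ((sign τ : ℤ) : ℝ) *
        ((if x (σ 0) = y (τ 0) then 1 else 0) * ω p q (Fin.tail (x ∘ σ)) (Fin.tail (y ∘ τ))) *
          θ (p + 1) (q + 1) x y = S := fun σ τ => by
    refine (sum_sign_mul_comp_perm_mul hθ
      (fun x y => (if x 0 = y 0 then 1 else 0) * ω p q (Fin.tail x) (Fin.tail y)) σ τ).trans ?_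
    simp only [ite_mul, one_mul, zero_mul, S]
  have hL : ∑ x, ∑ y, dfMul n (dfG n) ω (p + 1) (q + 1) x y * θ (p + 1) (q + 1) x y =
      ((p ! * q ! : ℕ) : ℝ)⁻¹ * ((p + 1)! * (q + 1)! * S) := by
    simp only [dfMul_dfG_apply, mul_assoc _ (∑ _, _), sum_mul, ← mul_sum]
    rw [sum_comm_cycle]
    simp only [sum_comm_cycle (u := univ (α := Perm (Fin (q + 1)))), hterm,
      sum_const, Finset.card_univ, Fintype.card_perm, Fintype.card_fin, nsmul_eq_mul]
    ring
  have hR : ∑ x, ∑ y, ω p q x y * dfContr n θ p q x y = S := by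
    simp only [S, sum_sum_ite_apply_zero_eq_sum_cons, Fin.tail_cons, dfContr, mul_sum]
  rw [dfInner, dfInner, hL, hR]
  push_cast
  field_simp

end

theorem stmt_2_general (n p q : ℕ) (hp : 1 ≤ p) (hq : 1 ≤ q) (ω θ : DoubleForm n)
    (hθ : dfHasBidegree n p q θ) :
    dfInner n p q (dfMul n (dfG n) ω) θ = dfInner n (p - 1) (q - 1) ω (dfContr n θ) := by
  obtain ⟨p, rfl⟩ := Nat.exists_eq_add_of_le' hp
  obtain ⟨q, rfl⟩ := Nat.exists_eq_add_of_le' hq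
  exact dfInner_dfG_mul_eq_dfInner_dfContr hθ ω

/-- for `p, q ≥ 1`, `ω` of bidegree `(p−1, q−1)` and `θ` of bidegree `(p, q)`,
`⟨g·ω, θ⟩ = ⟨ω, c_g θ⟩`: multiplication by `g` and the contraction `c_g` are adjoint to each
other with respect to the natural inner products on double forms. -/
theorem stmt_2 (n p q : ℕ) (hp : 1 ≤ p) (hq : 1 ≤ q) (ω θ : DoubleForm n)
    (hω : dfHasBidegree n (p - 1) (q - 1) ω) (hθ : dfHasBidegree n p q θ) :
    dfInner n p q (dfMul n (dfG n) ω) θ = dfInner n (p - 1) (q - 1) ω (dfContr n θ) :=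
  stmt_2_general n p q hp hq ω θ hθ
end

section
/- Let n ≥ 3 and k ≥ 1 with 2k ≤ n, let μ ∈ ℝ, and let R = (μ/2)·g² be the algebraic curvature tensor of constant sectional curvature μ. Then the 2k-Ricci tensor ℛ^{(2k)} = c_g^{2k−1}(R^k) satisfies ℛ^{(2k)} = λ_k·g, where λ_k = (n−1)(n−2)·C_{n,k}·μ^k and C_{n,k} = (2k)!·(n−3)!/(2^k·(n−2k)!). Equivalently, c_g^{2k−1}(g^{2k}) = ((2k)!·(n−1)!/(n−2k)!)·g. -/
/-!
In components, `g^m = m! · δ_m`, where `δ_m` is the generalized Kronecker delta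
`det [xᵢ = yⱼ]` placed in bidegree `(m, m)`. The product rule `g^a g^b = g^(a+b)` holds because
alternating a product of deltas on two complementary blocks over all permutations absorbs the
permutations of the blocks. Expanding `δ_(m+1)` along its first row and column gives
`c_g δ_(m+1) = (n - m) δ_m`, so `c_g g^(m+1) = (m+1)(n-m) g^m`; iterating `2k - 1` times from
`g^(2k)` leaves `(2k)! (n-1)! / (n-2k)! · g`. Finally `R^k = (μ/2)^k g^(2k)`.
-/

open Equiv Finset
open scoped Nat

local notation "ε" σ:max => ((Perm.sign σ : ℤ) : ℝ)

theorem Fin.eq_append_iff {α : Type*} {a b : ℕ} (w : Fin (a + b) → α) (y₁ : Fin a → α)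
    (y₂ : Fin b → α) :
    w = Fin.append y₁ y₂ ↔ w ∘ Fin.castAdd b = y₁ ∧ w ∘ Fin.natAdd a = y₂ := by
  constructor
  · rintro rfl
    exact ⟨funext (Fin.append_left y₁ y₂), funext (Fin.append_right y₁ y₂)⟩
  · rintro ⟨rfl, rfl⟩
    exact Fin.append_castAdd_natAdd.symm

theorem Fin.cons_self_swap_succ {α : Type*} {m : ℕ} (x : Fin m → α) (s j : Fin m) :
    (Fin.cons (x s) x : Fin (m + 1) → α) (swap 0 s.succ j.succ) = x j := by
  by_cases h : j = s
  · simp [h]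
  · simp [swap_apply_of_ne_of_ne (Fin.succ_ne_zero j) (Fin.succ_injective _ |>.ne h)]

section Kronecker

variable {ι β : Type*} [Fintype ι] [DecidableEq ι] [DecidableEq β]

theorem sign_mul_sign_self (σ : Perm ι) : ε σ * ε σ = 1 := by
  rw [← Int.cast_mul, ← Units.val_mul, Int.units_mul_self, Units.val_one, Int.cast_one]

theorem sum_sign_mul_comp_mul_right (f : Perm ι → ℝ) (e : Perm ι) :
    ∑ σ, ε σ * f (σ * e) = ε e * ∑ σ, ε σ * f σ := by
  rw [mul_sum]
  refine Fintype.sum_equiv (Equiv.mulRight e) _ _ fun σ => ?_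
  simp only [coe_mulRight, Perm.sign_mul, Units.val_mul, Int.cast_mul]
  linear_combination (-(ε σ) * f (σ * e)) * sign_mul_sign_self e

/-- The generalized Kronecker delta `δ^{y₁…y_m}_{x₁…x_m}`, i.e. `det [x i = y j]`. -/
noncomputable def kron (x y : ι → β) : ℝ :=
  ∑ σ : Perm ι, ε σ * if x ∘ σ = y then 1 else 0

theorem kron_comp_perm_right (x y : ι → β) (e : Perm ι) :
    kron x (y ∘ e) = ε e * kron x y := by
  have h : ∀ σ : Perm ι, (x ∘ σ = y ∘ e) ↔ x ∘ ⇑(σ * e⁻¹) = y := fun σ => by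
    rw [Perm.coe_mul, ← Function.comp_assoc, show ⇑e⁻¹ = e.symm from rfl, comp_symm_eq]
  simp only [kron, h]
  rw [sum_sign_mul_comp_mul_right (fun σ => if x ∘ σ = y then 1 else 0), Perm.sign_inv]

theorem sum_sign_mul_kron_mul_kron {a b : ℕ} (x : Fin (a + b) → β) (y₁ : Fin a → β)
    (y₂ : Fin b → β) :
    ∑ σ : Perm (Fin (a + b)),
        ε σ * (kron (x ∘ σ ∘ Fin.castAdd b) y₁ * kron (x ∘ σ ∘ Fin.natAdd a) y₂) =
      a ! * b ! * kron x (Fin.append y₁ y₂) := by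
  -- A pair of block permutations is one permutation of `Fin (a + b)`, which `σ` absorbs.
  let e (ρ : Perm (Fin a)) (π : Perm (Fin b)) : Perm (Fin (a + b)) :=
    finSumFinEquiv.permCongr (sumCongr ρ π)
  have sign_e (ρ π) : ε (e ρ π) = ε ρ * ε π := by
    simp [e, Perm.sign_permCongr, Perm.sign_sumCongr]
  have split (z : Fin (a + b) → β) :
      kron (z ∘ Fin.castAdd b) y₁ * kron (z ∘ Fin.natAdd a) y₂ =
        ∑ ρ, ∑ π, ε (e ρ π) * if z ∘ e ρ π = Fin.append y₁ y₂ then 1 else 0 := by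
    simp only [kron, sum_mul_sum, sign_e, Fin.eq_append_iff]
    refine sum_congr rfl fun ρ _ => sum_congr rfl fun π _ => ?_
    have h₁ : z ∘ e ρ π ∘ Fin.castAdd b = z ∘ Fin.castAdd b ∘ ρ := by
      funext i; simp [e, permCongr_apply]
    have h₂ : z ∘ e ρ π ∘ Fin.natAdd a = z ∘ Fin.natAdd a ∘ π := by
      funext i; simp [e, permCongr_apply]
    simp only [Function.comp_assoc, h₁, h₂, ite_and]
    split_ifs <;> ring
  calc ∑ σ : Perm (Fin (a + b)),
          ε σ * (kron (x ∘ σ ∘ Fin.castAdd b) y₁ * kron (x ∘ σ ∘ Fin.natAdd a) y₂)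
      = ∑ σ : Perm (Fin (a + b)), ε σ * ∑ ρ, ∑ π,
          ε (e ρ π) * if x ∘ ⇑(σ * e ρ π) = Fin.append y₁ y₂ then 1 else 0 :=
        sum_congr rfl fun σ _ => congrArg (ε σ * ·) (split (x ∘ σ))
    _ = ∑ ρ, ∑ π, ε (e ρ π) * ∑ σ : Perm (Fin (a + b)),
          ε σ * if x ∘ ⇑(σ * e ρ π) = Fin.append y₁ y₂ then 1 else 0 := by
        simp only [mul_sum]
        rw [sum_comm]
        refine sum_congr rfl fun ρ _ => ?_
        rw [sum_comm]
        refine sum_congr rfl fun π _ => sum_congr rfl fun σ _ => ?_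
        ring
    _ = ∑ _ρ : Perm (Fin a), ∑ _π : Perm (Fin b), kron x (Fin.append y₁ y₂) := by
        simp only [sum_sign_mul_comp_mul_right
            (fun σ => if x ∘ σ = Fin.append y₁ y₂ then 1 else 0),
          ← mul_assoc, sign_mul_sign_self, one_mul, kron]
    _ = a ! * b ! * kron x (Fin.append y₁ y₂) := by
        simp [card_univ, Fintype.card_perm, mul_assoc]

theorem kron_cons_cons {m : ℕ} (i : β) (x y : Fin m → β) :
    kron (Fin.cons i x : Fin (m + 1) → β) (Fin.cons i y) =
      kron x y - ∑ s, if x s = i then kron x y else 0 := by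
  set X : Fin (m + 1) → β := Fin.cons i x
  have cond (t : Fin (m + 1)) (κ : Perm (Fin m)) :
      (X ∘ Perm.decomposeFin.symm (t, κ) = Fin.cons i y) ↔
        X t = i ∧ ∀ j, X (swap 0 t (κ j).succ) = y j := by
    simp only [funext_iff, Fin.forall_fin_succ, Function.comp_apply,
      Perm.decomposeFin_symm_apply_zero, Perm.decomposeFin_symm_apply_succ, Fin.cons_zero,
      Fin.cons_succ]
  -- Expansion along the first row: sort `σ` by `σ 0`.
  rw [kron, ← (Perm.decomposeFin.symm).sum_comp, Fintype.sum_prod_type, Fin.sum_univ_succ,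
    sub_eq_add_neg, ← sum_neg_distrib]
  simp only [cond, Perm.decomposeFin.symm_sign]
  congr 1
  · refine sum_congr rfl fun κ _ => ?_
    simp [X, funext_iff]
  · refine sum_congr rfl fun s _ => ?_
    by_cases h : x s = i
    · subst h
      simp [X, Fin.cons_self_swap_succ, kron, funext_iff, ← sum_neg_distrib, apply_ite]
    · simp [X, h]

theorem sum_kron_cons_cons [Fintype β] {m : ℕ} (x y : Fin m → β) :
    ∑ i, kron (Fin.cons i x : Fin (m + 1) → β) (Fin.cons i y) =
      (Fintype.card β - m) * kron x y := by
  simp only [kron_cons_cons, sum_sub_distrib, sum_const, card_univ, nsmul_eq_mul]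
  rw [sum_comm]
  simp [sub_mul]

theorem sum_sign_mul_sign_mul_kron_mul_kron {a b : ℕ} (x y : Fin (a + b) → β) :
    ∑ σ : Perm (Fin (a + b)), ∑ τ : Perm (Fin (a + b)), ε σ * ε τ *
        (kron (x ∘ σ ∘ Fin.castAdd b) (y ∘ τ ∘ Fin.castAdd b) *
          kron (x ∘ σ ∘ Fin.natAdd a) (y ∘ τ ∘ Fin.natAdd a)) =
      a ! * b ! * ((a + b)! * kron x y) := by
  rw [sum_comm]
  calc _ = ∑ τ : Perm (Fin (a + b)), ε τ * (a ! * b ! * kron x (y ∘ τ)) := by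
        refine sum_congr rfl fun τ _ => ?_
        have hy : Fin.append (y ∘ τ ∘ Fin.castAdd b) (y ∘ τ ∘ Fin.natAdd a) = y ∘ τ :=
          Fin.append_castAdd_natAdd (f := y ∘ τ)
        rw [← hy, ← sum_sign_mul_kron_mul_kron, mul_sum]
        exact sum_congr rfl fun σ _ => by ring
    _ = a ! * b ! * ((a + b)! * kron x y) := by
        simp only [kron_comp_perm_right, ← mul_assoc, mul_comm _ (ε _), sign_mul_sign_self]
        simp [card_univ, Fintype.card_perm]
        ring

end Kronecker

section DoubleForms

variable {n : ℕ}

/-- `g^m` in closed form: `m!` times the generalized Kronecker delta, in bidegree `(m, m)`. -/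
noncomputable def dfKron (n m : ℕ) : DoubleForm n := fun p q x y =>
  if h : p = m ∧ q = m then
    m ! * kron (x ∘ Fin.cast h.1.symm) (y ∘ Fin.cast h.2.symm)
  else 0

theorem dfKron_apply {m : ℕ} (x y : Fin m → Fin n) : dfKron n m m m x y = m ! * kron x y := by
  rw [dfKron, dif_pos ⟨rfl, rfl⟩]
  rfl

theorem dfKron_eq_zero {m p q : ℕ} (h : ¬(p = m ∧ q = m)) : dfKron n m p q = 0 := by
  funext x y
  exact dif_neg h

theorem DoubleForm.congr_bidegree (θ : DoubleForm n) {k l b d : ℕ} (hk : k = b) (hl : l = d)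
    {f : Fin k → Fin n} {g : Fin l → Fin n} {f' : Fin b → Fin n} {g' : Fin d → Fin n}
    (hf : ∀ i, f i = f' (Fin.cast hk i)) (hg : ∀ j, g j = g' (Fin.cast hl j)) :
    θ k l f g = θ b d f' g' := by
  subst hk hl
  congr
  · exact funext hf
  · exact funext hg

theorem dfMul_apply_add {ω θ : DoubleForm n} {a b c d : ℕ}
    (hω : ∀ p q, ¬(p = a ∧ q = c) → ω p q = 0) (x : Fin (a + b) → Fin n)
    (y : Fin (c + d) → Fin n) :
    dfMul n ω θ (a + b) (c + d) x y =
      ((a ! * b ! * c ! * d ! : ℕ) : ℝ)⁻¹ *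
        ∑ σ : Perm (Fin (a + b)), ∑ τ : Perm (Fin (c + d)), ε σ * ε τ *
          (ω a c (x ∘ σ ∘ Fin.castAdd b) (y ∘ τ ∘ Fin.castAdd d) *
            θ b d (x ∘ σ ∘ Fin.natAdd a) (y ∘ τ ∘ Fin.natAdd c)) := by
  rw [dfMul, sum_eq_single ⟨a, by omega⟩, sum_eq_single ⟨c, by omega⟩]
  · simp only [Nat.add_sub_cancel_left]
    refine congrArg _ (sum_congr rfl fun σ _ => sum_congr rfl fun τ _ => ?_)
    congr 2
    exact θ.congr_bidegree (Nat.add_sub_cancel_left a b) (Nat.add_sub_cancel_left c d)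
      (fun i => rfl) (fun j => rfl)
  · intro q₁ _ hq
    simp [hω a q₁ fun h => hq (Fin.ext h.2)]
  · exact fun h => absurd (mem_univ _) h
  · intro p₁ _ hp
    refine sum_eq_zero fun q₁ _ => ?_
    simp [hω p₁ q₁ fun h => hp (Fin.ext h.1)]
  · exact fun h => absurd (mem_univ _) h

theorem dfMul_eq_zero {ω θ : DoubleForm n} {a b c d p q : ℕ}
    (hω : ∀ p q, ¬(p = a ∧ q = c) → ω p q = 0) (hθ : ∀ p q, ¬(p = b ∧ q = d) → θ p q = 0)
    (hpq : ¬(p = a + b ∧ q = c + d)) : dfMul n ω θ p q = 0 := by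
  funext x y
  refine sum_eq_zero fun p₁ _ => sum_eq_zero fun q₁ _ => ?_
  by_cases h : (p₁ : ℕ) = a ∧ (q₁ : ℕ) = c
  · simp [hθ (p - p₁) (q - q₁) (by omega)]
  · simp [hω p₁ q₁ h]

theorem dfMul_dfKron (a b : ℕ) : dfMul n (dfKron n a) (dfKron n b) = dfKron n (a + b) := by
  funext p q x y
  by_cases h : p = a + b ∧ q = a + b
  · obtain ⟨rfl, rfl⟩ := h
    simp only [dfMul_apply_add (fun _ _ => dfKron_eq_zero), dfKron_apply]
    calc _ = ((a ! * b ! * a ! * b ! : ℕ) : ℝ)⁻¹ * (a ! * b !) *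
          ∑ σ : Perm (Fin (a + b)), ∑ τ : Perm (Fin (a + b)), ε σ * ε τ *
            (kron (x ∘ σ ∘ Fin.castAdd b) (y ∘ τ ∘ Fin.castAdd b) *
              kron (x ∘ σ ∘ Fin.natAdd a) (y ∘ τ ∘ Fin.natAdd a)) := by
          simp only [mul_assoc, mul_sum]
          exact sum_congr rfl fun σ _ => sum_congr rfl fun τ _ => by ring
      _ = (a + b)! * kron x y := by
          rw [sum_sign_mul_sign_mul_kron_mul_kron]
          push_cast
          field_simp
  · rw [dfMul_eq_zero (fun _ _ => dfKron_eq_zero) (fun _ _ => dfKron_eq_zero) h, dfKron_eq_zero h]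

theorem dfContr_dfKron_succ (m : ℕ) :
    dfContr n (dfKron n (m + 1)) = (((m : ℝ) + 1) * (n - m)) • dfKron n m := by
  funext p q x y
  simp only [dfContr, Pi.smul_apply, smul_eq_mul]
  by_cases h : p = m ∧ q = m
  · obtain ⟨rfl, rfl⟩ := h
    simp only [dfKron_apply, ← mul_sum, sum_kron_cons_cons, Fintype.card_fin, Nat.factorial_succ]
    push_cast
    ring
  · simp [dfKron_eq_zero h, dfKron_eq_zero (m := m + 1) (p := p + 1) (q := q + 1) (by omega)]

theorem dfOne_eq_dfKron : dfOne n = dfKron n 0 := by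
  funext p q x y
  rcases p with _ | p <;> rcases q with _ | q
  · simp [dfOne, dfKron_apply, kron, Subsingleton.elim x y]
  all_goals simp [dfOne, dfKron_eq_zero]

theorem dfG_eq_dfKron : dfG n = dfKron n 1 := by
  funext p q x y
  rcases p with _ | _ | p <;> rcases q with _ | _ | q
  all_goals try simp [dfG, dfKron_eq_zero]
  simp [dfKron_apply, kron, funext_iff, Fin.forall_fin_one, eq_comm]

theorem dfPow_dfKron (a : ℕ) : ∀ k, dfPow n (dfKron n a) k = dfKron n (a * k)
  | 0 => dfOne_eq_dfKron
  | k + 1 => by rw [dfPow, dfPow_dfKron a k, dfMul_dfKron, Nat.mul_succ]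

theorem dfMul_smul_smul (c d : ℝ) (ω θ : DoubleForm n) :
    dfMul n (c • ω) (d • θ) = (c * d) • dfMul n ω θ := by
  funext p q x y
  simp only [dfMul, Pi.smul_apply, smul_eq_mul, mul_sum]
  exact sum_congr rfl fun _ _ => sum_congr rfl fun _ _ => sum_congr rfl fun _ _ =>
    sum_congr rfl fun _ _ => by ring

theorem dfPow_smul (c : ℝ) (ω : DoubleForm n) : ∀ k, dfPow n (c • ω) k = c ^ k • dfPow n ω k
  | 0 => by rw [pow_zero, one_smul]; rfl
  | k + 1 => by rw [dfPow, dfPow, dfPow_smul c ω k, dfMul_smul_smul, pow_succ]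

theorem dfContr_smul (c : ℝ) (ω : DoubleForm n) : dfContr n (c • ω) = c • dfContr n ω := by
  funext p q x y
  simp only [dfContr, Pi.smul_apply, smul_eq_mul, mul_sum]

theorem iterate_dfContr_smul (r : ℕ) (c : ℝ) (ω : DoubleForm n) :
    (dfContr n)^[r] (c • ω) = c • (dfContr n)^[r] ω := by
  induction r generalizing ω with
  | zero => rfl
  | succ r ih => rw [Function.iterate_succ_apply, Function.iterate_succ_apply, dfContr_smul, ih]

theorem iterate_dfContr_dfKron {j r : ℕ} (h : j + r ≤ n) :
    (dfContr n)^[r] (dfKron n (j + r)) =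
      (((j + 1).ascFactorial r * (n - j).descFactorial r : ℕ) : ℝ) • dfKron n j := by
  induction r with
  | zero => simp
  | succ r ih =>
    rw [Function.iterate_succ_apply, ← add_assoc, dfContr_dfKron_succ, iterate_dfContr_smul,
      ih (by omega), smul_smul, Nat.ascFactorial_succ, Nat.descFactorial_succ]
    congr 1
    push_cast [show j ≤ n by omega, show r ≤ n - j by omega]
    ring

end DoubleForms

theorem cast_ascFactorial_two_mul_descFactorial {n k : ℕ} (hk : 1 ≤ k) (h2k : 2 * k ≤ n) :
    ((Nat.ascFactorial 2 (2 * k - 1) * (n - 1).descFactorial (2 * k - 1) : ℕ) : ℝ) =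
      (2 * k)! * (n - 1)! / (n - 2 * k)! := by
  have hasc := Nat.factorial_mul_ascFactorial 1 (2 * k - 1)
  have hdesc := Nat.factorial_mul_descFactorial (n := n - 1) (k := 2 * k - 1) (by omega)
  rw [show 1 + (2 * k - 1) = 2 * k by omega, Nat.factorial_one, one_mul] at hasc
  rw [show n - 1 - (2 * k - 1) = n - 2 * k by omega] at hdesc
  rw [eq_div_iff (by positivity), ← hasc, ← hdesc]
  push_cast
  ring

/-- for `n ≥ 3`, `k ≥ 1`, `2k ≤ n`, `μ ∈ ℝ` and `R = (μ/2)·g²` the algebraic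
curvature tensor of constant sectional curvature `μ`, the 2k-Ricci tensor
`ℛ^{(2k)} = c_g^{2k−1}(R^k)` satisfies `ℛ^{(2k)} = λ_k·g` with
`λ_k = (n−1)(n−2)·C_{n,k}·μ^k`, `C_{n,k} = (2k)!·(n−3)!/(2^k·(n−2k)!)`; equivalently
`c_g^{2k−1}(g^{2k}) = ((2k)!·(n−1)!/(n−2k)!)·g`. -/
theorem stmt_4 (n k : ℕ) (hn : 3 ≤ n) (hk : 1 ≤ k) (h2k : 2 * k ≤ n) (μ : ℝ) :
    (dfContr n)^[2 * k - 1] (dfPow n ((μ / 2) • dfPow n (dfG n) 2) k) =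
        ((((n : ℝ) - 1) * ((n : ℝ) - 2) *
            (((2 * k).factorial : ℝ) * ((n - 3).factorial : ℝ) /
              (2 ^ k * ((n - 2 * k).factorial : ℝ))) * μ ^ k)) • dfG n ∧
      (dfContr n)^[2 * k - 1] (dfPow n (dfG n) (2 * k)) =
        ((((2 * k).factorial : ℝ) * ((n - 1).factorial : ℝ) /
            ((n - 2 * k).factorial : ℝ))) • dfG n := by
  have hg : (dfContr n)^[2 * k - 1] (dfPow n (dfG n) (2 * k)) =
      (((2 * k).factorial : ℝ) * ((n - 1).factorial : ℝ) / ((n - 2 * k).factorial : ℝ)) •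
        dfG n := by
    have h := iterate_dfContr_dfKron (n := n) (j := 1) (r := 2 * k - 1) (by omega)
    rw [show 1 + (2 * k - 1) = 2 * k by omega, cast_ascFactorial_two_mul_descFactorial hk h2k] at h
    rw [dfG_eq_dfKron, dfPow_dfKron, one_mul, h]
  refine ⟨?_, hg⟩
  have hfac : ((n - 1)! : ℝ) = ((n : ℝ) - 1) * ((n : ℝ) - 2) * (n - 3)! := by
    obtain ⟨m, rfl⟩ := Nat.exists_eq_add_of_le hn
    simp only [show 3 + m - 1 = m + 2 by omega, show 3 + m - 3 = m by omega,
      Nat.factorial_succ]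
    push_cast
    ring
  have hpow :
      dfPow n ((μ / 2) • dfPow n (dfG n) 2) k = (μ / 2) ^ k • dfPow n (dfG n) (2 * k) := by
    simp only [dfPow_smul, dfG_eq_dfKron, dfPow_dfKron, one_mul]
  rw [hpow, iterate_dfContr_smul, hg, smul_smul, hfac]
  congr 1
  rw [div_pow]
  field_simp
end

section
/- For every R ∈ C²(V) and every symmetric bilinear form h ∈ C^1(V), the first contraction of F_h(R) is given by c_g(F_h(R)) = ℛ∘h + h∘ℛ + 2·𝔑_R h, where ℛ = c_g R. -/
open Finset

section

variable {n : ℕ}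

lemma fin_cons_const_eq_vecCons (a b : Fin n) :
    (Fin.cons a (fun _ => b) : Fin 2 → Fin n) = ![a, b] := by
  funext k; fin_cases k <;> rfl

lemma dfMat_dfContr (ω : DoubleForm n) (v w : Fin n) :
    dfMat n (dfContr n ω) v w = ∑ k, ω 2 2 ![k, v] ![k, w] := by
  simp only [dfMat, dfContr, fin_cons_const_eq_vecCons]

lemma dfF_apply_two_two (h : Fin n → Fin n → ℝ) (ω : DoubleForm n) (a b c d : Fin n) :
    dfF n h ω 2 2 ![a, b] ![c, d] =
      (∑ i, h a i * ω 2 2 ![i, b] ![c, d]) + (∑ i, h b i * ω 2 2 ![a, i] ![c, d]) +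
      ((∑ i, h c i * ω 2 2 ![a, b] ![i, d]) + (∑ i, h d i * ω 2 2 ![a, b] ![c, i])) := by
  have update_zero (x y z : Fin n) : Function.update ![x, y] 0 z = ![z, y] := by
    funext k; fin_cases k <;> simp
  have update_one (x y z : Fin n) : Function.update ![x, y] 1 z = ![x, z] := by
    funext k; fin_cases k <;> simp
  simp only [dfF, Fin.sum_univ_two, update_zero, update_one, Matrix.cons_val_zero,
    Matrix.cons_val_one]

lemma vecCons_comp_swap (a b : Fin n) :
    ![a, b] ∘ (Equiv.swap 0 1 : Equiv.Perm (Fin 2)) = ![b, a] := by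
  funext k; fin_cases k <;> simp

lemma sign_swap_zero_one : ((Equiv.Perm.sign (Equiv.swap (0 : Fin 2) 1) : ℤ) : ℝ) = -1 := by
  rw [Equiv.Perm.sign_swap (by decide)]; norm_num

namespace dfHasBidegree

variable {ω : DoubleForm n}

lemma apply_swap_left (hω : dfHasBidegree n 2 2 ω) (a b : Fin n) (y : Fin 2 → Fin n) :
    ω 2 2 ![a, b] y = -ω 2 2 ![b, a] y := by
  have := hω.2.1 (Equiv.swap 0 1) ![a, b] y
  rw [vecCons_comp_swap, sign_swap_zero_one] at this
  linarith

lemma apply_swap_right (hω : dfHasBidegree n 2 2 ω) (x : Fin 2 → Fin n) (c d : Fin n) :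
    ω 2 2 x ![c, d] = -ω 2 2 x ![d, c] := by
  have := hω.2.2 (Equiv.swap 0 1) x ![c, d]
  rw [vecCons_comp_swap, sign_swap_zero_one] at this
  linarith

lemma apply_swap_swap (hω : dfHasBidegree n 2 2 ω) (a b c d : Fin n) :
    ω 2 2 ![a, b] ![c, d] = ω 2 2 ![b, a] ![d, c] := by
  rw [hω.apply_swap_left, hω.apply_swap_right, neg_neg]

end dfHasBidegree

end

/-- for every `R ∈ C²(V)` and every symmetric bilinear form `h ∈ C¹(V)`,
`c_g(F_h(R)) = ℛ∘h + h∘ℛ + 2·𝔑_R h`, where `ℛ = c_g R`. -/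
theorem stmt_9 (n : ℕ) (R : DoubleForm n) (hR : dfIsC2 n R)
    (h : Fin n → Fin n → ℝ) (hsym : ∀ i j, h i j = h j i) :
    dfMat n (dfContr n (dfF n h R)) =
      fun v w =>
        (∑ i : Fin n, dfMat n (dfContr n R) v i * h i w) +
        (∑ i : Fin n, h v i * dfMat n (dfContr n R) i w) +
        2 * curvAction n R h v w := by
  funext v w
  have hRic_left : ∑ i, dfMat n (dfContr n R) v i * h i w =
      ∑ k, ∑ i, h w i * R 2 2 ![k, v] ![k, i] := by
    simp only [dfMat_dfContr, sum_mul, hsym w, mul_comm (h _ w)]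
    exact sum_comm
  have hRic_right : ∑ i, h v i * dfMat n (dfContr n R) i w =
      ∑ k, ∑ i, h v i * R 2 2 ![k, i] ![k, w] := by
    simp only [dfMat_dfContr, mul_sum]
    exact sum_comm
  have hN_left : curvAction n R h v w = ∑ k, ∑ i, h k i * R 2 2 ![i, v] ![k, w] := by
    simp only [curvAction, hR.1.apply_swap_swap _ v _ w, mul_comm (h _ _)]
    exact sum_comm
  have hN_right : curvAction n R h v w = ∑ k, ∑ i, h k i * R 2 2 ![k, v] ![i, w] := by
    simp only [curvAction, hR.1.apply_swap_swap _ v _ w, mul_comm (h _ _), hsym _ _]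
  rw [dfMat_dfContr]
  simp only [dfF_apply_two_two, sum_add_distrib]
  rw [hRic_left, hRic_right, ← hN_left, ← hN_right]
  ring
end

section
/- Let h be a symmetric bilinear form on V and, for t ∈ ℝ near 0, let g_t = g + t·h (positive definite for small t) and let c_{g_t} denote the contraction operator associated to g_t. Then the derivative at t = 0 of the curve of (1,1) double forms t ↦ c_{g_t}(g·g) equals 2·(h − (tr_g h)·g), where tr_g h = c_g h. -/
/-! In bidegree `(2,2)` the square of the metric is
`(g·g)(x₁x₂ ⊗ y₁y₂) = 2(δ(x₁,y₁)δ(x₂,y₂) - δ(x₁,y₂)δ(x₂,y₁))`, so contracting it with the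
inverse Gram matrix `A = G⁻¹` gives `c_G(g·g) = 2(tr A · g - Aᵀ)`. The derivative of
`t ↦ (1 + t h)⁻¹` at `0` is `-h`, hence the derivative of the curve is `2(hᵀ - tr h · g)`,
and `hᵀ = h`. -/

lemma dfG_of_ne {n p q : ℕ} (hpq : ¬(p = 1 ∧ q = 1)) (x : Fin p → Fin n) (y : Fin q → Fin n) :
    dfG n p q x y = 0 := by
  unfold dfG
  split <;> simp_all

lemma dfG_of_eq_one {n p q : ℕ} (hp : p = 1) (hq : q = 1) (x : Fin p → Fin n)
    (y : Fin q → Fin n) : dfG n p q x y = if x ⟨0, by omega⟩ = y ⟨0, by omega⟩ then 1 else 0 := by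
  subst hp hq
  rfl

lemma Equiv.Perm.sum_fin_two {M : Type*} [AddCommMonoid M] (f : Equiv.Perm (Fin 2) → M) :
    ∑ σ, f σ = f 1 + f (Equiv.swap 0 1) := by
  rw [show (Finset.univ : Finset (Equiv.Perm (Fin 2))) = {1, Equiv.swap 0 1} by decide,
    Finset.sum_pair (by decide)]

lemma dfMul_dfG_dfG_two_two (n : ℕ) (x y : Fin 2 → Fin n) :
    dfMul n (dfG n) (dfG n) 2 2 x y =
      2 * ((if x 0 = y 0 then 1 else 0) * (if x 1 = y 1 then 1 else 0)
        - (if x 0 = y 1 then 1 else 0) * (if x 1 = y 0 then 1 else 0)) := by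
  simp only [dfMul, Fin.sum_univ_succ, Fin.sum_univ_zero]
  simp (disch := decide) only [dfG_of_ne, dfG_of_eq_one, mul_zero, Finset.sum_const_zero,
    add_zero, zero_add, Equiv.Perm.sum_fin_two]
  norm_num [Equiv.Perm.sign_swap]
  split_ifs <;> norm_num

lemma dfContrM_dfMul_dfG_dfG_one_one (n : ℕ) (G : Matrix (Fin n) (Fin n) ℝ) (v w : Fin n) :
    dfContrM n G (dfMul n (dfG n) (dfG n)) 1 1 (fun _ => v) (fun _ => w) =
      2 * ((G⁻¹).trace * (if v = w then 1 else 0) - G⁻¹ w v) := by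
  have hterm (i j : Fin n) :
      dfMul n (dfG n) (dfG n) (1 + 1) (1 + 1) (Fin.cons i fun _ => v) (Fin.cons j fun _ => w) =
        2 * ((if i = j then 1 else 0) * (if v = w then 1 else 0)
          - (if i = w then 1 else 0) * (if v = j then 1 else 0)) := by
    simpa using dfMul_dfG_dfG_two_two n (Fin.cons i fun _ => v) (Fin.cons j fun _ => w)
  simp only [dfContrM, hterm]
  simp only [mul_sub, mul_ite, mul_one, mul_zero, Finset.sum_sub_distrib, Finset.sum_ite_irrel,
    Finset.sum_ite_eq, Finset.sum_ite_eq', Finset.mem_univ, ↓reduceIte, Finset.sum_const_zero,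
    Matrix.trace, Matrix.diag_apply, Finset.mul_sum]
  split_ifs <;> simp only [zero_sub, mul_comm]

theorem hasDerivAt_ringInverse_one_add_smul {𝕜 R : Type*} [NontriviallyNormedField 𝕜]
    [NormedRing R] [NormedAlgebra 𝕜 R] [CompleteSpace R] (a : R) :
    HasDerivAt (fun t : 𝕜 => Ring.inverse (1 + t • a)) (-a) 0 := by
  have hline : HasDerivAt (fun t : 𝕜 => 1 + t • a) a 0 := by
    simpa using ((hasDerivAt_id (0 : 𝕜)).smul_const a).const_add 1
  have hinv : HasFDerivAt Ring.inverse (-ContinuousLinearMap.mulLeftRight 𝕜 R 1 1)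
      (1 + (0 : 𝕜) • a) := by
    simpa using hasFDerivAt_ringInverse (𝕜 := 𝕜) (1 : Rˣ)
  simpa [Function.comp_def] using hinv.comp_hasDerivAt 0 hline

section

attribute [local instance] Matrix.linftyOpNormedAddCommGroup Matrix.linftyOpNormedRing
  Matrix.linftyOpNormedAlgebra

theorem Matrix.hasDerivAt_inv_one_add_smul_apply {𝕜 m : Type*} [RCLike 𝕜] [Fintype m] [DecidableEq m]
    (h : Matrix m m 𝕜) (i j : m) :
    HasDerivAt (fun t : 𝕜 => (1 + t • h)⁻¹ i j) (-h i j) 0 := by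
  have hinv := hasDerivAt_ringInverse_one_add_smul (𝕜 := 𝕜) h
  simp only [← Matrix.nonsing_inv_eq_ringInverse] at hinv
  let entry : Matrix m m 𝕜 →L[𝕜] 𝕜 :=
    (ContinuousLinearMap.proj j).comp
      (ContinuousLinearMap.proj (R := 𝕜) (φ := fun _ : m => m → 𝕜) i)
  have := entry.hasFDerivAt.comp_hasDerivAt 0 hinv
  simp only [entry] at this
  exact this

end

/-- for a symmetric bilinear form `h` on `V` and `g_t = g + t·h` (positive
definite for small `t`), the derivative at `t = 0` of the curve of `(1,1)` double forms
`t ↦ c_{g_t}(g·g)` equals `2·(h − (tr_g h)·g)`. -/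
theorem stmt_14 (n : ℕ) (h : Matrix (Fin n) (Fin n) ℝ) (hsym : ∀ i j, h i j = h j i)
    (v w : Fin n) :
    HasDerivAt
      (fun t : ℝ =>
        dfContrM n (1 + t • h) (dfMul n (dfG n) (dfG n)) 1 1 (fun _ => v) (fun _ => w))
      (2 * (h v w - (∑ i : Fin n, h i i) * (if v = w then (1 : ℝ) else 0))) 0 := by
  simp only [dfContrM_dfMul_dfG_dfG_one_one]
  have htrace : HasDerivAt (fun t : ℝ => ((1 + t • h)⁻¹).trace) (-h.trace) 0 := by
    simpa [Matrix.trace] using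
      HasDerivAt.fun_sum fun i _ => Matrix.hasDerivAt_inv_one_add_smul_apply h i i
  refine (((htrace.mul_const _).sub
    (Matrix.hasDerivAt_inv_one_add_smul_apply h w v)).const_mul 2).congr_deriv ?_
  rw [hsym w v, Matrix.trace]
  simp only [Matrix.diag_apply]
  ring
end
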